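/- arXiv:1901.06993 — 3 statements merged into one kernel-verified Lean document; each statement's English description precedes it below -/
import Mathlib

section
/- Let f : X ⥤ Y be a functor between small categories and let D be any category. Then the functor category Fun(∫_contra(f), D) is equivalent to the comma category Comma(f^*, 𝟭_{Fun(X,D)}), whose objects are triples (N, M, η) with N : Y ⥤ D, M : X ⥤ D and η : f ⋙ N ⟶ M a natural transformation, where f^* : Fun(Y, D) ⥤ Fun(X, D) is the restriction functor given by precomposition with f. -/
/-!
STATEMENT 8: For a functor `f : X ⥤ Y` between small categories and any category `D`, the
functor category `Fun(∫_contra(f), D)` is equivalent to the comma category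
`Comma(f^*, 𝟭_{Fun(X,D)})`, where `f^* : Fun(Y,D) ⥤ Fun(X,D)` is precomposition with `f`.
-/

open CategoryTheory

universe v₁ u₁ u

namespace BGP

/-- The vertex set of the `Δ¹` quiver: `false` is the source, `true` is the sink. -/
def AVert : Type := Bool

/-- Hom types of the `Δ¹` quiver: one arrow from `false` to `true`. -/
def aHom : Bool → Bool → Type
  | false, true => PUnit
  | _, _ => PEmpty

instance : Quiver.{0} AVert := ⟨fun a b => aHom a b⟩

variable {X Y : Type u} [SmallCategory X] [SmallCategory Y]

/-- The componentwise-opposite of the `Δ¹`-shaped diagram of small categories corresponding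
to a functor `f : X ⥤ Y`. -/
def aPrefunctorOp (f : X ⥤ Y) : Prefunctor AVert Cat.{u, u} where
  obj v := match v with
    | false => Cat.of Xᵒᵖ
    | true => Cat.of Yᵒᵖ
  map {v w} a := match v, w, a with
    | false, true, _ => (f.op.toCatHom : Cat.of Xᵒᵖ ⟶ Cat.of Yᵒᵖ)
    | false, false, a => a.elim
    | true, false, a => a.elim
    | true, true, a => a.elim

/-- The contravariant Grothendieck construction `∫_contra(f)`: its objects are the disjoint
union of the objects of `X` and of `Y`; morphisms within `X` resp. `Y` are those of `X` resp.
`Y`; morphisms from `y` to `x` are morphisms `y → f(x)` in `Y`; there are no morphisms from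
`X` to `Y`. It is realised as the opposite of the covariant Grothendieck construction of the
componentwise-opposite diagram. -/
abbrev AContraGroth (f : X ⥤ Y) : Type u :=
  (Grothendieck (Paths.lift (aPrefunctorOp f)))ᵒᵖ

end BGP

/-! A functor out of `∫_contra(f)` is determined by its restrictions `N` and `M` to the fibres `Y`
and `X` together with its values on the connecting arrows `f x → x` (the identities of `f x`),
which form a natural transformation `f ⋙ N ⟶ M`. Restricting is faithful and full because every
morphism of `∫_contra(f)` lies in a fibre or is a morphism of `Y` followed by a connecting arrow;
it is essentially surjective because `Grothendieck.functorFrom` glues any triple `(N, M, η)` into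
a functor. -/

namespace BGP

namespace AVert

def src : AVert := false

def tgt : AVert := true

def arrow : src ⟶ tgt := show aHom false true from ⟨⟩

lemma hom_cases : ∀ {a b : AVert}, (a ⟶ b) → a = src ∧ b = tgt
  | false, true, _ => ⟨rfl, rfl⟩
  | false, false, e | true, _, e => PEmpty.elim e

lemma paths_obj_cases :
    ∀ b : Paths AVert, b = (Paths.of AVert).obj src ∨ b = (Paths.of AVert).obj tgt
  | false => .inl rfl
  | true => .inr rfl

lemma paths_hom_src_src (p : (Paths.of AVert).obj src ⟶ (Paths.of AVert).obj src) :
    p = 𝟙 _ := by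
  change Quiver.Path _ _ at p
  cases p with
  | nil => rfl
  | cons _ e => exact absurd (hom_cases e).2 Bool.noConfusion

lemma not_paths_hom_tgt_src (p : (Paths.of AVert).obj tgt ⟶ (Paths.of AVert).obj src) :
    False := by
  change Quiver.Path _ _ at p
  cases p with
  | cons _ e => exact absurd (hom_cases e).2 Bool.noConfusion

lemma paths_hom_tgt_tgt (p : (Paths.of AVert).obj tgt ⟶ (Paths.of AVert).obj tgt) :
    p = 𝟙 _ := by
  change Quiver.Path _ _ at p
  cases p with
  | nil => rfl
  | cons q e =>
    obtain ⟨rfl, -⟩ := hom_cases e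
    exact (not_paths_hom_tgt_src q).elim

lemma paths_hom_src_tgt (p : (Paths.of AVert).obj src ⟶ (Paths.of AVert).obj tgt) :
    p = (Paths.of AVert).map arrow := by
  change Quiver.Path _ _ at p
  cases p with
  | cons q e =>
    obtain ⟨rfl, -⟩ := hom_cases e
    rw [paths_hom_src_src q]
    rfl

end AVert

namespace AContraGroth

variable {X Y : Type u} [SmallCategory X] [SmallCategory Y] (f : X ⥤ Y)

abbrev opDiagram : Paths AVert ⥤ Cat.{u, u} := Paths.lift (aPrefunctorOp f)

def inclX : X ⥤ AContraGroth f :=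
  (Grothendieck.ι (opDiagram f) ((Paths.of AVert).obj AVert.src)).rightOp

def inclY : Y ⥤ AContraGroth f :=
  (Grothendieck.ι (opDiagram f) ((Paths.of AVert).obj AVert.tgt)).rightOp

def connection : f ⋙ inclY f ⟶ inclX f :=
  NatTrans.rightOp (Grothendieck.ιNatTrans (F := opDiagram f) ((Paths.of AVert).map AVert.arrow))

theorem obj_induction {P : AContraGroth f → Prop} (hX : ∀ x, P ((inclX f).obj x))
    (hY : ∀ y, P ((inclY f).obj y)) : ∀ k, P k
  | ⟨⟨false, x⟩⟩ => hX x.unop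
  | ⟨⟨true, y⟩⟩ => hY y.unop

theorem hom_induction {P : ∀ ⦃k k' : AContraGroth f⦄, (k ⟶ k') → Prop}
    (hX : ∀ ⦃x x' : X⦄ (w : x ⟶ x'), P ((inclX f).map w))
    (hY : ∀ ⦃y y' : Y⦄ (v : y ⟶ y'), P ((inclY f).map v))
    (hYX : ∀ ⦃y : Y⦄ (x : X) (v : y ⟶ f.obj x),
      P ((inclY f).map v ≫ (connection f).app x)) :
    ∀ ⦃k k'⦄ (h : k ⟶ k'), P h := by
  rintro ⟨b, x⟩ ⟨b', x'⟩ ⟨p, φ⟩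
  obtain rfl | rfl := AVert.paths_obj_cases b <;> obtain rfl | rfl := AVert.paths_obj_cases b'
  -- `Paths.lift` sends identities to identities on the nose, so every `eqToHom` and every
  -- transport along an identity path occurring in these fibres is definitionally `𝟙`.
  · obtain rfl := AVert.paths_hom_src_src p
    have hφ : (inclX f).map φ.unop = Opposite.op ⟨_, φ⟩ :=
      Quiver.Hom.unop_inj <| Grothendieck.ext _ _ rfl <|
        (Category.id_comp _).trans (Category.id_comp _)
    exact hφ ▸ hX φ.unop
  · exact (AVert.not_paths_hom_tgt_src p).elim
  · obtain rfl := AVert.paths_hom_src_tgt p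
    have hφ : (inclY f).map φ.unop ≫ (connection f).app x'.unop = Opposite.op ⟨_, φ⟩ :=
      Quiver.Hom.unop_inj <| Grothendieck.ext _ _ rfl <|
        (Category.id_comp _).trans <| (Category.id_comp _).trans <|
          (Category.id_comp _).trans (Category.id_comp _)
    exact hφ ▸ hYX _ φ.unop
  · obtain rfl := AVert.paths_hom_tgt_tgt p
    have hφ : (inclY f).map φ.unop = Opposite.op ⟨_, φ⟩ :=
      Quiver.Hom.unop_inj <| Grothendieck.ext _ _ rfl <|
        (Category.id_comp _).trans (Category.id_comp _)
    exact hφ ▸ hY φ.unop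

variable (D : Type u₁) [Category.{v₁} D]

def toComma :
    (AContraGroth f ⥤ D) ⥤ Comma ((Functor.whiskeringLeft X Y D).obj f) (𝟭 (X ⥤ D)) where
  obj G := ⟨inclY f ⋙ G, inclX f ⋙ G, Functor.whiskerRight (connection f) G⟩
  map τ := ⟨Functor.whiskerLeft (inclY f) τ, Functor.whiskerLeft (inclX f) τ, by ext; simp⟩

variable {f D}

def natTransMk {G G' : AContraGroth f ⥤ D} (α : inclY f ⋙ G ⟶ inclY f ⋙ G')
    (β : inclX f ⋙ G ⟶ inclX f ⋙ G')
    (w : Functor.whiskerLeft f α ≫ Functor.whiskerRight (connection f) G' =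
      Functor.whiskerRight (connection f) G ≫ β) : G ⟶ G' where
  app
    | ⟨⟨false, x⟩⟩ => β.app x.unop
    | ⟨⟨true, y⟩⟩ => α.app y.unop
  naturality := hom_induction f (fun _ _ w => β.naturality w) (fun _ _ v => α.naturality v)
    fun y x v => by
      have hw := NatTrans.congr_app w x
      simp only [NatTrans.comp_app, Functor.whiskerLeft_app, Functor.whiskerRight_app] at hw
      simp only [Functor.map_comp, Category.assoc]
      change _ ≫ _ ≫ β.app x = α.app y ≫ _ ≫ _
      rw [← hw]
      exact α.naturality_assoc v _

instance : (toComma f D).Faithful where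
  map_injective h := by
    ext k
    induction k using obj_induction with
    | hX x => exact NatTrans.congr_app (congrArg CommaMorphism.right h) x
    | hY y => exact NatTrans.congr_app (congrArg CommaMorphism.left h) y

instance : (toComma f D).Full where
  map_surjective u := ⟨natTransMk u.left u.right u.w, by ext <;> rfl⟩

section ofComma

variable (c : Comma ((Functor.whiskeringLeft X Y D).obj f) (𝟭 (X ⥤ D)))

def ofCommaFib : ∀ b : Paths AVert, ↑((opDiagram f).obj b) ⥤ Dᵒᵖ
  | false => c.right.op
  | true => c.left.op

def ofCommaHom : ∀ {b b' : Paths AVert} (p : b ⟶ b'),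
    ofCommaFib c b ⟶ ((opDiagram f).map p).toFunctor ⋙ ofCommaFib c b'
  | false, false, p => eqToHom (by rw [AVert.paths_hom_src_src p]; rfl)
  | false, true, p => NatTrans.op c.hom ≫ eqToHom (by rw [AVert.paths_hom_src_tgt p]; rfl)
  | true, false, p => (AVert.not_paths_hom_tgt_src p).elim
  | true, true, p => eqToHom (by rw [AVert.paths_hom_tgt_tgt p]; rfl)

lemma ofCommaHom_id : ∀ b : Paths AVert,
    ofCommaHom c (𝟙 b) = eqToHom (by rw [CategoryTheory.Functor.map_id]; rfl)
  | false | true => rfl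

lemma ofCommaHom_comp : ∀ (b₁ b₂ b₃ : Paths AVert) (p : b₁ ⟶ b₂) (q : b₂ ⟶ b₃),
    ofCommaHom c (p ≫ q) = ofCommaHom c p ≫
      Functor.whiskerLeft ((opDiagram f).map p).toFunctor (ofCommaHom c q) ≫
      eqToHom (by simp only [Functor.map_comp]; rfl) := by
  intro b₁ b₂ b₃ p q
  obtain rfl | rfl := AVert.paths_obj_cases b₁ <;> obtain rfl | rfl := AVert.paths_obj_cases b₂ <;>
    obtain rfl | rfl := AVert.paths_obj_cases b₃
  all_goals first
    | exact (AVert.not_paths_hom_tgt_src p).elim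
    | exact (AVert.not_paths_hom_tgt_src q).elim
    | skip
  · obtain rfl := AVert.paths_hom_src_src p
    obtain rfl := AVert.paths_hom_src_src q
    ext x
    change 𝟙 _ = 𝟙 _ ≫ 𝟙 _ ≫ 𝟙 _
    simp
  · obtain rfl := AVert.paths_hom_src_src p
    obtain rfl := AVert.paths_hom_src_tgt q
    ext x
    change (NatTrans.op c.hom).app x ≫ 𝟙 _ = 𝟙 _ ≫ ((NatTrans.op c.hom).app x ≫ 𝟙 _) ≫ 𝟙 _
    simp
  · obtain rfl := AVert.paths_hom_src_tgt p
    obtain rfl := AVert.paths_hom_tgt_tgt q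
    ext x
    change (NatTrans.op c.hom).app x ≫ 𝟙 _ = ((NatTrans.op c.hom).app x ≫ 𝟙 _) ≫ 𝟙 _ ≫ 𝟙 _
    simp
  · obtain rfl := AVert.paths_hom_tgt_tgt p
    obtain rfl := AVert.paths_hom_tgt_tgt q
    ext x
    change 𝟙 _ = 𝟙 _ ≫ 𝟙 _ ≫ 𝟙 _
    simp

def ofComma : AContraGroth f ⥤ D :=
  (Grothendieck.functorFrom (ofCommaFib c) (ofCommaHom c) (ofCommaHom_id c)
    (ofCommaHom_comp c)).leftOp

lemma ofComma_map_inclY {y y' : Y} (v : y ⟶ y') :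
    (ofComma c).map ((inclY f).map v) = c.left.map v := by
  change c.left.map (v ≫ 𝟙 _) ≫ 𝟙 _ = _
  simp

lemma ofComma_map_inclX {x x' : X} (w : x ⟶ x') :
    (ofComma c).map ((inclX f).map w) = c.right.map w := by
  change c.right.map (w ≫ 𝟙 _) ≫ 𝟙 _ = _
  simp

lemma ofComma_map_connection (x : X) : (ofComma c).map ((connection f).app x) = c.hom.app x := by
  change c.left.map (𝟙 _) ≫ 𝟙 _ ≫ c.hom.app x = _
  simp

def toCommaObjOfCommaIso : (toComma f D).obj (ofComma c) ≅ c :=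
  Comma.isoMk
    (NatIso.ofComponents (fun _ => Iso.refl _) fun v =>
      (Category.comp_id _).trans ((ofComma_map_inclY c v).trans (Category.id_comp _).symm))
    (NatIso.ofComponents (fun _ => Iso.refl _) fun w =>
      (Category.comp_id _).trans ((ofComma_map_inclX c w).trans (Category.id_comp _).symm))
    (by
      ext x
      exact (Category.id_comp _).trans
        ((ofComma_map_connection c x).symm.trans (Category.comp_id _).symm))

end ofComma

instance : (toComma f D).EssSurj := ⟨fun c => ⟨ofComma c, ⟨toCommaObjOfCommaIso c⟩⟩⟩

instance : (toComma f D).IsEquivalence where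

end AContraGroth

end BGP

open BGP

/-- For a functor `f : X ⥤ Y` between small categories and any category `D`, the functor
category `Fun(∫_contra(f), D)` is equivalent to the comma category `Comma(f^*, 𝟭_{Fun(X,D)})`,
whose objects are triples `(N, M, η : f ⋙ N ⟶ M)`. -/
theorem contraGroth_functorCategory_equiv_comma
    {X Y : Type u} [SmallCategory X] [SmallCategory Y] (f : X ⥤ Y)
    (D : Type u₁) [Category.{v₁} D] :
    Nonempty ((AContraGroth f ⥤ D) ≌ Comma ((Functor.whiskeringLeft X Y D).obj f) (𝟭 (X ⥤ D))) :=
  ⟨(AContraGroth.toComma f D).asEquivalence⟩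
end

section
/- Let Q be a finite bipartite quiver with Q₀ = L ⊔ R, let F be a Q-shaped diagram of small categories, and let D be a category with finite products. Let X = ∐_{l∈L} F(l) and Y = ∐_{r∈R} F(r), so that Fun(X, D) ≅ ∏_{l∈L} Fun(F(l), D) and Fun(Y, D) ≅ ∏_{r∈R} Fun(F(r), D). Define the functor G_F : Fun(Y, D) ⥤ Fun(X, D) by (G_F N)(x) = ∏_{α : l → r} N(F(α)(x)) for x an object of F(l), the product ranging over all arrows of Q with source l. Then the functor category Fun(∫_co F, D) is equivalent to the comma category Comma(𝟭_{Fun(X,D)}, G_F), whose objects are triples (M, N, η : M ⟶ G_F(N)). -/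
/-!
STATEMENT 9: For a finite bipartite quiver `Q` with `Q₀ = L ⊔ R`, a `Q`-shaped diagram `F` of
small categories, and a category `D` with finite products, the functor category
`Fun(∫_co F, D)` is equivalent to the comma category `Comma(𝟭_{Fun(X,D)}, G_F)`, where
`X = ∐_{l∈L} F(l)`, `Y = ∐_{r∈R} F(r)` and `G_F : Fun(Y,D) ⥤ Fun(X,D)` is given by
`(G_F N)(x) = ∏_{α : l → r} N(F(α)(x))` for `x ∈ F(l)`.
-/

open CategoryTheory

universe v₁ u₁ u

namespace BGP

variable {L R : Type u}

/-- The vertex set of the bipartite quiver, tagged with the arrow data. -/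
def BipVert (_Arr : L → R → Type u) : Type u := L ⊕ R

/-- Hom types of the bipartite quiver: all arrows go from `L` to `R`. -/
def bipHom (Arr : L → R → Type u) : L ⊕ R → L ⊕ R → Type u
  | Sum.inl l, Sum.inr r => Arr l r
  | _, _ => PEmpty

instance (Arr : L → R → Type u) : Quiver.{u} (BipVert Arr) :=
  ⟨fun a b => bipHom Arr a b⟩

variable (Arr : L → R → Type u) (FL : L → Cat.{u, u}) (FR : R → Cat.{u, u})

/-- The `Q`-shaped diagram of small categories, as a prefunctor on the bipartite quiver. -/
def bipPrefunctor (Fmap : ∀ ⦃l : L⦄ ⦃r : R⦄, Arr l r → (FL l ⟶ FR r)) :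
    Prefunctor (BipVert Arr) Cat.{u, u} where
  obj v := match v with
    | Sum.inl l => FL l
    | Sum.inr r => FR r
  map {v w} a := match v, w, a with
    | Sum.inl _, Sum.inr _, a => Fmap a
    | Sum.inl _, Sum.inl _, a => a.elim
    | Sum.inr _, Sum.inl _, a => a.elim
    | Sum.inr _, Sum.inr _, a => a.elim

/-- The covariant Grothendieck construction `∫_co F`: objects are pairs `(v, x)` with `v ∈ Q₀`
and `x ∈ F(v)`; morphisms `(v, x) → (v, x')` are morphisms `x → x'` in `F(v)`, and morphisms
`(l, x) → (r, y)` are pairs `(α : l → r, F(α)(x) → y)`. -/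
abbrev CoGroth (Fmap : ∀ ⦃l : L⦄ ⦃r : R⦄, Arr l r → (FL l ⟶ FR r)) : Type u :=
  Grothendieck (Paths.lift (bipPrefunctor Arr FL FR Fmap))

@[simp] lemma sigmaHom_mk_id {I : Type u} {C : I → Type u} [∀ i, Category.{u} (C i)] {i : I}
    (X : C i) :
    CategoryTheory.Sigma.SigmaHom.mk (𝟙 X) = 𝟙 (⟨i, X⟩ : Σ i, C i) := rfl

@[simp] lemma sigmaHom_mk_comp {I : Type u} {C : I → Type u} [∀ i, Category.{u} (C i)] {i : I}
    {X Y Z : C i} (f : X ⟶ Y) (g : Y ⟶ Z) :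
    CategoryTheory.Sigma.SigmaHom.mk (f ≫ g) =
      (CategoryTheory.Sigma.SigmaHom.mk f ≫ CategoryTheory.Sigma.SigmaHom.mk g :
        (⟨i, X⟩ : Σ i, C i) ⟶ ⟨i, Z⟩) := rfl

variable [Fintype R] [∀ l r, Fintype (Arr l r)]
variable (Fmap : ∀ ⦃l : L⦄ ⦃r : R⦄, Arr l r → (FL l ⟶ FR r))
variable (D : Type u₁) [Category.{v₁} D] [Limits.HasFiniteProducts D]

/-- The `l`-component of `G_F N`: the functor `F(l) ⥤ D` sending `x` to
`∏_{α : l → r} N(F(α)(x))`, the product ranging over all arrows of `Q` with source `l`. -/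
noncomputable def GFcomponent (N : (Σ r, (FR r : Type u)) ⥤ D) (l : L) :
    (FL l : Type u) ⥤ D where
  obj x := ∏ᶜ fun p : Σ r, Arr l r => N.obj ⟨p.1, (Fmap p.2).toFunctor.obj x⟩
  map {x y} g := Limits.Pi.map fun p =>
    N.map ((CategoryTheory.Sigma.incl p.1).map ((Fmap p.2).toFunctor.map g))
  map_id x := by simp
  map_comp {x y z} g h := by
    simp [Limits.Pi.map_comp_map]

/-- The functor `G_F : Fun(Y, D) ⥤ Fun(X, D)` with `X = ∐_{l∈L} F(l)` and `Y = ∐_{r∈R} F(r)`,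
given by `(G_F N)(x) = ∏_{α : l → r} N(F(α)(x))` for `x` an object of `F(l)`. -/
noncomputable def GF : ((Σ r, (FR r : Type u)) ⥤ D) ⥤ ((Σ l, (FL l : Type u)) ⥤ D) where
  obj N := CategoryTheory.Sigma.desc fun l => GFcomponent Arr FL FR Fmap D N l
  map {N N'} η :=
    { app := fun x => Limits.Pi.map fun p : Σ r, Arr x.1 r =>
        η.app ⟨p.1, (Fmap p.2).toFunctor.obj x.2⟩
      naturality := by
        rintro ⟨l, a⟩ ⟨l', b⟩ ⟨g⟩
        dsimp [GFcomponent]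
        first
          | (erw [Limits.Pi.map_comp_map, Limits.Pi.map_comp_map]
             congr 1
             funext p
             exact η.naturality _)
          | (apply Limits.Pi.hom_ext; intro p; simp) }
  map_id N := by
    apply NatTrans.ext
    funext x
    simp
    rfl
  map_comp {N N' N''} η θ := by
    apply NatTrans.ext
    funext x
    dsimp
    exact (Limits.Pi.map_comp_map _ _).symm

end BGP


/-! The base of `∫_co F` is the free category on `Q`, so a functor `K : ∫_co F ⥤ D` amounts to
functors on the fibres together with, for each arrow `α : l → r`, a natural transformation
`K|_{F(l)} ⟶ F(α) ⋙ K|_{F(r)}`; no coherence has to be checked, since the transformation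
attached to a path is forced to be the composite of those of its edges. By the universal property
of the product, the transformations indexed by the arrows out of `l` are the same as one
transformation `K|_{F(l)} ⟶ G_F(K|_Y)|_{F(l)}`. Hence `K ↦ (K|_X, K|_Y, η)` is fully faithful
and essentially surjective. -/

namespace CategoryTheory

lemma Functor.eqToHom_comp_whiskerLeft {C B E : Type*} [Category C] [Category B] [Category E]
    {K K' : C ⥤ B} (h : K = K') {G H : B ⥤ E} (β : G ⟶ H) :
    eqToHom (congrArg (· ⋙ G) h) ≫ Functor.whiskerLeft K' β =
      Functor.whiskerLeft K β ≫ eqToHom (congrArg (· ⋙ H) h) := by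
  subst h
  simp

namespace Grothendieck

lemma hom_eq_ιNatTrans_app_comp {C : Type*} [Category C] {F : C ⥤ Cat.{v₁, u₁}}
    {X Y : Grothendieck F} (f : X ⟶ Y) :
    f = (ιNatTrans f.base).app X.fiber ≫ (ι F Y.base).map f.fiber := by
  refine Grothendieck.ext _ _ (Category.comp_id _).symm ?_
  change _ = eqToHom _ ≫
    (F.map (𝟙 Y.base)).toFunctor.map (𝟙 ((F.map f.base).toFunctor.obj X.fiber)) ≫
      eqToHom _ ≫ f.fiber
  simp only [CategoryTheory.Functor.map_id, Category.id_comp]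
  exact (eqToHom_trans_assoc _ _ _).symm

section FreeBase

variable {V : Type*} [Quiver V] (F : V ⥤q Cat.{v₁, u₁}) {E : Type*} [Category E]

lemma ιNatTrans_nil_app {a : V} (x : F.obj a) :
    (ιNatTrans (F := Paths.lift F) (X := a) (Y := a) Quiver.Path.nil).app x = 𝟙 _ :=
  rfl

lemma ιNatTrans_cons_app {a b c : V} (p : Quiver.Path a b) (e : b ⟶ c) (x : F.obj a) :
    (ιNatTrans (F := Paths.lift F) (X := a) (Y := c) (p.cons e)).app x =
      (ιNatTrans (F := Paths.lift F) (X := a) (Y := b) p).app x ≫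
        (ιNatTrans (F := Paths.lift F) (X := b) (Y := c) e.toPath).app _ := by
  refine Grothendieck.ext _ _ rfl ?_
  change eqToHom _ ≫ 𝟙 _ = eqToHom _ ≫ (F.map e).toFunctor.map (𝟙 _) ≫ 𝟙 _
  simp

variable {F} in
def natTransOfEdges {K K' : Grothendieck (Paths.lift F) ⥤ E}
    (app : ∀ X, K.obj X ⟶ K'.obj X)
    (naturality_fiber : ∀ (v : V) {x y : F.obj v} (g : x ⟶ y),
      K.map ((ι (Paths.lift F) v).map g) ≫ app ⟨v, y⟩ =
        app ⟨v, x⟩ ≫ K'.map ((ι (Paths.lift F) v).map g))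
    (naturality_edge : ∀ {a b : V} (e : a ⟶ b) (x : F.obj a),
      K.map ((ιNatTrans (F := Paths.lift F) (X := a) (Y := b) e.toPath).app x) ≫ app _ =
        app ⟨a, x⟩ ≫
          K'.map ((ιNatTrans (F := Paths.lift F) (X := a) (Y := b) e.toPath).app x)) :
    K ⟶ K' where
  app := app
  naturality X Y f := by
    have naturality_path : ∀ {a b : V} (p : Quiver.Path a b) (x : F.obj a),
        K.map ((ιNatTrans (F := Paths.lift F) (X := a) (Y := b) p).app x) ≫ app _ =
          app ⟨a, x⟩ ≫
            K'.map ((ιNatTrans (F := Paths.lift F) (X := a) (Y := b) p).app x) := by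
      intro a b p x
      induction p with
      | nil =>
        erw [ιNatTrans_nil_app, K.map_id, K'.map_id, Category.id_comp, Category.comp_id]
        rfl
      | cons p e ih =>
        erw [ιNatTrans_cons_app, K.map_comp, K'.map_comp, Category.assoc, naturality_edge,
          reassoc_of% ih]
        exact Category.assoc _ _ _
    rw [hom_eq_ιNatTrans_app_comp f]
    erw [K.map_comp, K'.map_comp, Category.assoc, naturality_fiber, reassoc_of% naturality_path]
    exact Category.assoc _ _ _

variable (fib : ∀ v, F.obj v ⥤ E)
  (edge : ∀ {a b : V} (e : a ⟶ b), fib a ⟶ (F.map e).toFunctor ⋙ fib b)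

def functorFromPathsHom {a : V} : ∀ {b : V} (p : Quiver.Path a b),
    fib a ⟶ ((Paths.lift F).map p).toFunctor ⋙ fib b
  | _, .nil => 𝟙 (fib a)
  | _, .cons p e => functorFromPathsHom p ≫ Functor.whiskerLeft _ (edge e)

lemma functorFromPathsHom_comp {a b c : Paths V} (p : a ⟶ b) (q : b ⟶ c) :
    functorFromPathsHom F fib edge (p ≫ q) =
      functorFromPathsHom F fib edge p ≫
        Functor.whiskerLeft ((Paths.lift F).map p).toFunctor (functorFromPathsHom F fib edge q) ≫
          eqToHom (by simp only [CategoryTheory.Functor.map_comp]; rfl) := by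
  induction q using Quiver.Path.rec with
  | nil =>
    ext x
    change _ = _ ≫ 𝟙 _ ≫ 𝟙 _
    simp only [Category.comp_id]
    exact (Category.comp_id _).symm
  | cons q e ih =>
    change functorFromPathsHom F fib edge (p ≫ q) ≫ Functor.whiskerLeft _ (edge e) = _
    rw [ih]
    erw [Category.assoc, Category.assoc, Functor.eqToHom_comp_whiskerLeft
      (congrArg Cat.Hom.toFunctor ((Paths.lift F).map_comp p q)).symm,
      Functor.whiskerLeft_comp, Category.assoc]
    rfl

def functorFromPaths : Grothendieck (Paths.lift F) ⥤ E :=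
  functorFrom fib (fun p => functorFromPathsHom F fib edge p) (fun _ => rfl)
    (fun _ _ _ p q => functorFromPathsHom_comp F fib edge p q)

lemma functorFromPaths_map_ι {v : V} {x y : F.obj v} (g : x ⟶ y) :
    (functorFromPaths F fib edge).map ((ι (Paths.lift F) v).map g) = (fib v).map g := by
  change 𝟙 _ ≫ (fib v).map (𝟙 _ ≫ g) = _
  simp only [Category.id_comp]

lemma functorFromPaths_map_ιNatTrans {a b : V} (e : a ⟶ b) (x : F.obj a) :
    (functorFromPaths F fib edge).map
        ((ιNatTrans (F := Paths.lift F) (X := a) (Y := b) e.toPath).app x) =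
      (edge e).app x := by
  change (𝟙 _ ≫ (edge e).app x) ≫ (fib b).map (𝟙 _) = _
  simp only [Category.id_comp, CategoryTheory.Functor.map_id]
  exact Category.comp_id _

end FreeBase

end Grothendieck

end CategoryTheory

namespace BGP

open CategoryTheory Limits Grothendieck

section Bipartite

variable {L R : Type u} {Arr : L → R → Type u} {FL : L → Cat.{u, u}} {FR : R → Cat.{u, u}}
  (Fmap : ∀ ⦃l : L⦄ ⦃r : R⦄, Arr l r → (FL l ⟶ FR r))

abbrev CoGroth.inl (l : L) : (FL l : Type u) ⥤ CoGroth Arr FL FR Fmap :=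
  ι (Paths.lift (bipPrefunctor Arr FL FR Fmap)) (Sum.inl l)

abbrev CoGroth.inr (r : R) : (FR r : Type u) ⥤ CoGroth Arr FL FR Fmap :=
  ι (Paths.lift (bipPrefunctor Arr FL FR Fmap)) (Sum.inr r)

abbrev CoGroth.arrow {l : L} {r : R} (α : Arr l r) (x : FL l) :
    (CoGroth.inl Fmap l).obj x ⟶ (CoGroth.inr Fmap r).obj ((Fmap α).toFunctor.obj x) := by
  exact (ιNatTrans (F := Paths.lift (bipPrefunctor Arr FL FR Fmap)) (X := Sum.inl l)
    (Y := Sum.inr r) (Quiver.Hom.toPath (α : bipHom Arr (Sum.inl l) (Sum.inr r)))).app x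

lemma CoGroth.arrow_naturality {l : L} {r : R} (α : Arr l r) {x y : FL l} (g : x ⟶ y) :
    (CoGroth.inl Fmap l).map g ≫ CoGroth.arrow Fmap α y =
      CoGroth.arrow Fmap α x ≫ (CoGroth.inr Fmap r).map ((Fmap α).toFunctor.map g) :=
  (ιNatTrans (F := Paths.lift (bipPrefunctor Arr FL FR Fmap)) (X := Sum.inl l)
    (Y := Sum.inr r) (Quiver.Hom.toPath (α : bipHom Arr (Sum.inl l) (Sum.inr r)))).naturality g

variable [Fintype R] [∀ l r, Fintype (Arr l r)] (D : Type u₁) [Category.{v₁} D]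
  [HasFiniteProducts D]

lemma GF_obj_map_π (N : (Σ r, (FR r : Type u)) ⥤ D) {l : L} {x y : FL l} (g : x ⟶ y)
    (p : Σ r, Arr l r) :
    ((GF Arr FL FR Fmap D).obj N).map (Sigma.SigmaHom.mk g) ≫
        Pi.π (fun p : Σ r, Arr l r => N.obj ⟨p.1, (Fmap p.2).toFunctor.obj y⟩) p =
      Pi.π (fun p : Σ r, Arr l r => N.obj ⟨p.1, (Fmap p.2).toFunctor.obj x⟩) p ≫
        N.map (Sigma.SigmaHom.mk ((Fmap p.2).toFunctor.map g)) :=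
  Pi.map_π (fun p : Σ r, Arr l r => N.map (Sigma.SigmaHom.mk ((Fmap p.2).toFunctor.map g))) p

lemma GF_map_app_π {N N' : (Σ r, (FR r : Type u)) ⥤ D} (β : N ⟶ N') {l : L} (x : FL l)
    (p : Σ r, Arr l r) :
    ((GF Arr FL FR Fmap D).map β).app ⟨l, x⟩ ≫
        Pi.π (fun p : Σ r, Arr l r => N'.obj ⟨p.1, (Fmap p.2).toFunctor.obj x⟩) p =
      Pi.π (fun p : Σ r, Arr l r => N.obj ⟨p.1, (Fmap p.2).toFunctor.obj x⟩) p ≫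
        β.app ⟨p.1, (Fmap p.2).toFunctor.obj x⟩ :=
  Pi.map_π (fun p : Σ r, Arr l r => β.app ⟨p.1, (Fmap p.2).toFunctor.obj x⟩) p

noncomputable def toCommaObj (K : CoGroth Arr FL FR Fmap ⥤ D) :
    Comma (𝟭 ((Σ l, (FL l : Type u)) ⥤ D)) (GF Arr FL FR Fmap D) where
  left := Sigma.desc fun l => CoGroth.inl Fmap l ⋙ K
  right := Sigma.desc fun r => CoGroth.inr Fmap r ⋙ K
  hom :=
    { app := fun x => Pi.lift fun p : Σ r, Arr x.1 r => K.map (CoGroth.arrow Fmap p.2 x.2)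
      naturality := by
        rintro ⟨l, x⟩ ⟨_, y⟩ ⟨g⟩
        refine Pi.hom_ext _ _ fun p => ?_
        erw [Category.assoc, Category.assoc, Pi.lift_π, GF_obj_map_π, Pi.lift_π_assoc,
          ← K.map_comp, ← K.map_comp]
        exact congrArg K.map (CoGroth.arrow_naturality Fmap p.2 g) }

lemma toCommaObj_hom_app_π (K : CoGroth Arr FL FR Fmap ⥤ D) {l : L} (x : FL l)
    (p : Σ r, Arr l r) :
    (toCommaObj Fmap D K).hom.app ⟨l, x⟩ ≫
        Pi.π (fun p : Σ r, Arr l r =>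
          K.obj ((CoGroth.inr Fmap p.1).obj ((Fmap p.2).toFunctor.obj x))) p =
      K.map (CoGroth.arrow Fmap p.2 x) :=
  Pi.lift_π _ p

noncomputable def toComma :
    (CoGroth Arr FL FR Fmap ⥤ D) ⥤
      Comma (𝟭 ((Σ l, (FL l : Type u)) ⥤ D)) (GF Arr FL FR Fmap D) where
  obj := toCommaObj Fmap D
  map {K K'} τ :=
    { left := Sigma.natTrans fun l => Functor.whiskerLeft (CoGroth.inl Fmap l) τ
      right := Sigma.natTrans fun r => Functor.whiskerLeft (CoGroth.inr Fmap r) τ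
      w := by
        ext ⟨l, x⟩
        refine Pi.hom_ext _ _ fun p => ?_
        erw [NatTrans.comp_app, Category.assoc, Category.assoc, toCommaObj_hom_app_π,
          GF_map_app_π, ← Category.assoc, toCommaObj_hom_app_π]
        exact (τ.naturality _).symm }

variable {Fmap D}

lemma toCommaObj_hom_w {K K' : CoGroth Arr FL FR Fmap ⥤ D}
    (h : toCommaObj Fmap D K ⟶ toCommaObj Fmap D K') {l : L} {r : R} (α : Arr l r) (x : FL l) :
    h.left.app ⟨l, x⟩ ≫ K'.map (CoGroth.arrow Fmap α x) =
      K.map (CoGroth.arrow Fmap α x) ≫ h.right.app ⟨r, (Fmap α).toFunctor.obj x⟩ := by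
  have hw := NatTrans.congr_app h.w ⟨l, x⟩ =≫
    Pi.π (fun p : Σ r, Arr l r =>
      K'.obj ((CoGroth.inr Fmap p.1).obj ((Fmap p.2).toFunctor.obj x))) ⟨r, α⟩
  erw [Category.assoc, toCommaObj_hom_app_π, NatTrans.comp_app, Category.assoc, GF_map_app_π,
    ← Category.assoc, toCommaObj_hom_app_π] at hw
  exact hw

def toCommaPreimageApp {K K' : CoGroth Arr FL FR Fmap ⥤ D}
    (h : toCommaObj Fmap D K ⟶ toCommaObj Fmap D K') :
    ∀ X : CoGroth Arr FL FR Fmap, K.obj X ⟶ K'.obj X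
  | ⟨Sum.inl l, x⟩ => h.left.app ⟨l, x⟩
  | ⟨Sum.inr r, x⟩ => h.right.app ⟨r, x⟩

instance : (toComma Fmap D).Full where
  map_surjective {K K'} h := by
    refine ⟨natTransOfEdges (toCommaPreimageApp h) ?_ ?_, ?_⟩
    · rintro (l | r) x y g
      · exact h.left.naturality (Sigma.SigmaHom.mk g)
      · exact h.right.naturality (Sigma.SigmaHom.mk g)
    · rintro (l | r) (l' | r') e x
      · exact e.elim
      · exact (toCommaObj_hom_w h e x).symm
      · exact e.elim
      · exact e.elim
    · ext ⟨_, _⟩ <;> rfl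

instance : (toComma Fmap D).Faithful where
  map_injective {K K'} {τ θ} h := by
    ext ⟨v | v, x⟩
    · exact NatTrans.congr_app (congrArg CommaMorphism.left h) ⟨v, x⟩
    · exact NatTrans.congr_app (congrArg CommaMorphism.right h) ⟨v, x⟩

def fibOfComma (c : Comma (𝟭 ((Σ l, (FL l : Type u)) ⥤ D)) (GF Arr FL FR Fmap D)) :
    ∀ v : BipVert Arr, ((bipPrefunctor Arr FL FR Fmap).obj v : Type u) ⥤ D
  | Sum.inl l => Sigma.incl (C := fun l => (FL l : Type u)) l ⋙ c.left
  | Sum.inr r => Sigma.incl (C := fun r => (FR r : Type u)) r ⋙ c.right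

noncomputable def edgeOfComma
    (c : Comma (𝟭 ((Σ l, (FL l : Type u)) ⥤ D)) (GF Arr FL FR Fmap D)) :
    ∀ {a b : BipVert Arr} (e : a ⟶ b),
      fibOfComma c a ⟶ ((bipPrefunctor Arr FL FR Fmap).map e).toFunctor ⋙ fibOfComma c b
  | Sum.inl l, Sum.inr r, α =>
    { app := fun x => c.hom.app ⟨l, x⟩ ≫
          Pi.π (fun p : Σ r, Arr l r => c.right.obj ⟨p.1, (Fmap p.2).toFunctor.obj x⟩)
            ⟨r, α⟩
      naturality := fun x y g => by
        have h := c.hom.naturality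
          (Sigma.SigmaHom.mk g : (⟨l, x⟩ : Σ l, (FL l : Type u)) ⟶ ⟨l, y⟩)
        erw [← Category.assoc, h, Category.assoc, GF_obj_map_π, ← Category.assoc]
        rfl }
  | Sum.inl _, Sum.inl _, e => e.elim
  | Sum.inr _, Sum.inl _, e => e.elim
  | Sum.inr _, Sum.inr _, e => e.elim

noncomputable def ofComma (c : Comma (𝟭 ((Σ l, (FL l : Type u)) ⥤ D)) (GF Arr FL FR Fmap D)) :
    CoGroth Arr FL FR Fmap ⥤ D :=
  functorFromPaths _ (fibOfComma c) (edgeOfComma c)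

noncomputable def toCommaObjOfCommaIso
    (c : Comma (𝟭 ((Σ l, (FL l : Type u)) ⥤ D)) (GF Arr FL FR Fmap D)) :
    toCommaObj Fmap D (ofComma c) ≅ c :=
  Comma.isoMk
    (Sigma.natIso fun l => NatIso.ofComponents (fun _ => Iso.refl _) fun g => by
      erw [Category.comp_id, Category.id_comp]
      exact functorFromPaths_map_ι (bipPrefunctor Arr FL FR Fmap) (fibOfComma c) (edgeOfComma c)
        (v := Sum.inl l) g)
    (Sigma.natIso fun r => NatIso.ofComponents (fun _ => Iso.refl _) fun g => by
      erw [Category.comp_id, Category.id_comp]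
      exact functorFromPaths_map_ι (bipPrefunctor Arr FL FR Fmap) (fibOfComma c) (edgeOfComma c)
        (v := Sum.inr r) g)
    (by
      ext ⟨l, x⟩
      refine Pi.hom_ext _ _ fun p => ?_
      erw [NatTrans.comp_app, NatTrans.comp_app, Category.assoc, Category.id_comp, Category.assoc,
        GF_map_app_π, ← Category.assoc, toCommaObj_hom_app_π, Category.comp_id]
      exact (functorFromPaths_map_ιNatTrans (bipPrefunctor Arr FL FR Fmap) (fibOfComma c)
        (edgeOfComma c) (a := Sum.inl l) (b := Sum.inr p.1) p.2 x).symm)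

instance : (toComma Fmap D).EssSurj where
  mem_essImage c := ⟨ofComma c, ⟨toCommaObjOfCommaIso c⟩⟩

end Bipartite

end BGP

open BGP

theorem coGroth_functorCategory_equiv_comma_general
    {L R : Type u} [Fintype R]
    (Arr : L → R → Type u) [∀ l r, Fintype (Arr l r)]
    (FL : L → Cat.{u, u}) (FR : R → Cat.{u, u})
    (Fmap : ∀ ⦃l : L⦄ ⦃r : R⦄, Arr l r → (FL l ⟶ FR r))
    (D : Type u₁) [Category.{v₁} D] [Limits.HasFiniteProducts D] :
    Nonempty ((CoGroth Arr FL FR Fmap ⥤ D) ≌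
      Comma (𝟭 ((Σ l, (FL l : Type u)) ⥤ D)) (GF Arr FL FR Fmap D)) :=
  haveI : (toComma Fmap D).IsEquivalence := { }
  ⟨(toComma Fmap D).asEquivalence⟩

/-- For a finite bipartite quiver `Q` with `Q₀ = L ⊔ R`, a `Q`-shaped diagram `F` of small
categories, and a category `D` with finite products, the functor category `Fun(∫_co F, D)` is
equivalent to the comma category `Comma(𝟭_{Fun(X,D)}, G_F)`, whose objects are triples
`(M, N, η : M ⟶ G_F(N))`. -/
theorem coGroth_functorCategory_equiv_comma
    {L R : Type u} [Fintype L] [Fintype R]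
    (Arr : L → R → Type u) [∀ l r, Fintype (Arr l r)]
    (FL : L → Cat.{u, u}) (FR : R → Cat.{u, u})
    (Fmap : ∀ ⦃l : L⦄ ⦃r : R⦄, Arr l r → (FL l ⟶ FR r))
    (D : Type u₁) [Category.{v₁} D] [Limits.HasFiniteProducts D] :
    Nonempty ((CoGroth Arr FL FR Fmap ⥤ D) ≌
      Comma (𝟭 ((Σ l, (FL l : Type u)) ⥤ D)) (GF Arr FL FR Fmap D)) :=
  coGroth_functorCategory_equiv_comma_general Arr FL FR Fmap D
end

section
/- Let Q be a finite bipartite quiver with Q₀ = L ⊔ R and let F be a Q-shaped diagram of posets, i.e. F assigns to each vertex v a partially ordered set F(v) (regarded as a category) and to each arrow α : l → r a monotone map F(α) : F(l) → F(r). Then every Hom-set of the covariant Grothendieck construction ∫_co F has at most one element (equivalently, ∫_co F is a poset) if and only if for every pair of distinct parallel arrows α, β : l → r in Q and every element x ∈ F(l), the elements F(α)(x) and F(β)(x) have no common upper bound in F(r). -/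
open CategoryTheory

universe u

namespace BGP

variable {L R : Type u}

variable (Arr : L → R → Type u) (FL : L → Cat.{u, u}) (FR : R → Cat.{u, u})

variable {Arr} in
/-- A `Q`-shaped diagram of posets, regarded as a diagram of small categories: the fibre over a
vertex `v` is the poset `F(v)` regarded as a category, and the monotone map `F(α)` attached to
an arrow `α : l → r` is regarded as a functor. -/
def posetDiagram {PL : L → Type u} [∀ l, PartialOrder (PL l)]
    {PR : R → Type u} [∀ r, PartialOrder (PR r)]
    (Fmap : ∀ ⦃l : L⦄ ⦃r : R⦄, Arr l r → (PL l →o PR r)) :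
    ∀ ⦃l : L⦄ ⦃r : R⦄, Arr l r → (Cat.of (PL l) ⟶ Cat.of (PR r)) :=
  fun _ _ α => (Fmap α).monotone.functor.toCatHom

end BGP

/-!
Every path in a bipartite quiver has length at most one. Hence a morphism of `∫_co F` either
lies in a single fibre, where it is unique because the fibres are posets, or is a single arrow
`α : l → r` together with the relation `F(α)(x) ≤ y`. Two morphisms `(l, x) ⟶ (r, y)` can thus
differ only by using distinct arrows `α ≠ β`, and then `y` is a common upper bound of
`F(α)(x)` and `F(β)(x)`.
-/

lemma Quiver.Hom.toPath_injective {V : Type*} [Quiver V] {a b : V} :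
    Function.Injective (Quiver.Hom.toPath : (a ⟶ b) → Quiver.Path a b) :=
  fun _ _ h => by injection h

namespace BGP

variable {L R : Type u} {Arr : L → R → Type u}

instance isEmpty_hom_from_inr (r : R) (b : BipVert Arr) :
    IsEmpty (Quiver.Hom (V := BipVert Arr) (.inr r) b) := by
  cases b <;> exact inferInstanceAs (IsEmpty PEmpty)

instance isEmpty_hom_to_inl (a : BipVert Arr) (l : L) :
    IsEmpty (Quiver.Hom (V := BipVert Arr) a (.inl l)) := by
  cases a <;> exact inferInstanceAs (IsEmpty PEmpty)

lemma not_hom_comp_hom {a b c : BipVert Arr} (e : a ⟶ b) (e' : b ⟶ c) : False := by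
  cases b with
  | inl l => exact isEmptyElim e
  | inr r => exact isEmptyElim e'

lemma subsingleton_path_from_inr (r : R) (b : BipVert Arr) :
    Subsingleton (Quiver.Path (V := BipVert Arr) (.inr r) b) := by
  constructor
  rintro (_ | ⟨_ | ⟨_, e⟩, e'⟩) q
  · rcases q with _ | ⟨_ | ⟨_, d⟩, d'⟩
    · rfl
    · exact (isEmpty_hom_from_inr r _).elim d'
    · exact (not_hom_comp_hom d d').elim
  · exact isEmptyElim e'
  · exact (not_hom_comp_hom e e').elim

lemma subsingleton_path_to_inl (a : BipVert Arr) (l : L) :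
    Subsingleton (Quiver.Path (V := BipVert Arr) a (.inl l)) := by
  constructor
  rintro (_ | ⟨_, e⟩) q
  · rcases q with _ | ⟨_, e'⟩
    · rfl
    · exact isEmptyElim e'
  · exact isEmptyElim e

lemma path_inl_inr_eq_toPath {l : L} {r : R}
    (p : Quiver.Path (V := BipVert Arr) (.inl l) (.inr r)) :
    ∃ α : Arr l r, p = Quiver.Hom.toPath (V := BipVert Arr) α := by
  rcases p with _ | ⟨_ | ⟨_, e⟩, α⟩
  · exact ⟨α, rfl⟩
  · exact (not_hom_comp_hom e α).elim

variable {PL : L → Type u} [∀ l, PartialOrder (PL l)] {PR : R → Type u} [∀ r, PartialOrder (PR r)]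

abbrev PosetCoGroth (Fmap : ∀ ⦃l : L⦄ ⦃r : R⦄, Arr l r → (PL l →o PR r)) : Type u :=
  CoGroth Arr (fun l => Cat.of (PL l)) (fun r => Cat.of (PR r)) (posetDiagram Fmap)

variable {Fmap : ∀ ⦃l : L⦄ ⦃r : R⦄, Arr l r → (PL l →o PR r)}

instance isThin_fiber (v : Paths (BipVert Arr)) :
    Quiver.IsThin ((Paths.lift (bipPrefunctor Arr (fun l => Cat.of (PL l))
      (fun r => Cat.of (PR r)) (posetDiagram Fmap))).obj v) := by
  rcases v with l | r
  · exact inferInstanceAs (Quiver.IsThin (PL l))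
  · exact inferInstanceAs (Quiver.IsThin (PR r))

lemma PosetCoGroth.hom_ext {a b : PosetCoGroth Fmap} {f g : a ⟶ b} (h : f.base = g.base) :
    f = g :=
  Grothendieck.ext f g h (Subsingleton.elim _ _)

def PosetCoGroth.homOfArrow {l : L} {r : R} (α : Arr l r) {x : PL l} {y : PR r}
    (h : Fmap α x ≤ y) : (⟨.inl l, x⟩ : PosetCoGroth Fmap) ⟶ ⟨.inr r, y⟩ :=
  ⟨Quiver.Hom.toPath (V := BipVert Arr) α, (homOfLE h : (Fmap α x : PR r) ⟶ y)⟩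

lemma PosetCoGroth.exists_arrow_of_hom {l : L} {r : R} {x : PL l} {y : PR r}
    (f : (⟨.inl l, x⟩ : PosetCoGroth Fmap) ⟶ ⟨.inr r, y⟩) :
    ∃ α : Arr l r, f.base = Quiver.Hom.toPath (V := BipVert Arr) α ∧ Fmap α x ≤ y := by
  obtain ⟨α, hα⟩ := path_inl_inr_eq_toPath f.base
  have hf := f.fiber
  rw [hα] at hf
  exact ⟨α, hα, leOfHom (hf : (Fmap α x : PR r) ⟶ y)⟩

lemma PosetCoGroth.subsingleton_hom
    (h : ∀ (l : L) (r : R) (α β : Arr l r), α ≠ β → ∀ x : PL l,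
      ¬∃ y : PR r, Fmap α x ≤ y ∧ Fmap β x ≤ y)
    (a b : PosetCoGroth Fmap) : Subsingleton (a ⟶ b) := by
  refine ⟨fun f g => hom_ext ?_⟩
  rcases a with ⟨l | r, x⟩ <;> rcases b with ⟨l' | r', y⟩
  · exact (subsingleton_path_to_inl _ l').elim f.base g.base
  · obtain ⟨α, hfα, hα⟩ := exists_arrow_of_hom f
    obtain ⟨β, hgβ, hβ⟩ := exists_arrow_of_hom g
    obtain rfl : α = β := by_contra fun hne => h l r' α β hne x ⟨y, hα, hβ⟩
    rw [hfα, hgβ]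
  all_goals exact (subsingleton_path_from_inr r _).elim f.base g.base

end BGP

open BGP

theorem coGroth_poset_iff_no_common_upper_bound_general
    {L R : Type u}
    (Arr : L → R → Type u)
    (PL : L → Type u) [∀ l, PartialOrder (PL l)]
    (PR : R → Type u) [∀ r, PartialOrder (PR r)]
    (Fmap : ∀ ⦃l : L⦄ ⦃r : R⦄, Arr l r → (PL l →o PR r)) :
    (∀ a b : CoGroth Arr (fun l => Cat.of (PL l)) (fun r => Cat.of (PR r)) (posetDiagram Fmap),
        Subsingleton (a ⟶ b)) ↔
      (∀ (l : L) (r : R) (α β : Arr l r), α ≠ β → ∀ x : PL l,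
        ¬∃ y : PR r, Fmap α x ≤ y ∧ Fmap β x ≤ y) := by
  refine ⟨fun hsub l r α β hne x ⟨y, hα, hβ⟩ => hne ?_, PosetCoGroth.subsingleton_hom⟩
  have hbase := congrArg Grothendieck.Hom.base
    ((hsub _ _).elim (PosetCoGroth.homOfArrow α hα) (PosetCoGroth.homOfArrow β hβ))
  exact Quiver.Hom.toPath_injective (V := BipVert Arr) hbase

/-- For a finite bipartite quiver `Q` with `Q₀ = L ⊔ R` and a `Q`-shaped diagram of posets `F`,
every Hom-set of `∫_co F` has at most one element (i.e. `∫_co F` is a poset) if and only if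
for all distinct parallel arrows `α, β : l → r` of `Q` and every `x ∈ F(l)`, the elements
`F(α)(x)` and `F(β)(x)` have no common upper bound in `F(r)`. -/
theorem coGroth_poset_iff_no_common_upper_bound
    {L R : Type u} [Fintype L] [Fintype R]
    (Arr : L → R → Type u) [∀ l r, Fintype (Arr l r)]
    (PL : L → Type u) [∀ l, PartialOrder (PL l)]
    (PR : R → Type u) [∀ r, PartialOrder (PR r)]
    (Fmap : ∀ ⦃l : L⦄ ⦃r : R⦄, Arr l r → (PL l →o PR r)) :
    (∀ a b : CoGroth Arr (fun l => Cat.of (PL l)) (fun r => Cat.of (PR r)) (posetDiagram Fmap),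
        Subsingleton (a ⟶ b)) ↔
      (∀ (l : L) (r : R) (α β : Arr l r), α ≠ β → ∀ x : PL l,
        ¬∃ y : PR r, Fmap α x ≤ y ∧ Fmap β x ≤ y) :=
  coGroth_poset_iff_no_common_upper_bound_general Arr PL PR Fmap
end
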